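/- Consider N users, each user n with valuation v_n > 0 and resource occupancy Φ_n > 0, and suppose the accepted set C and the optimal set C* satisfy: (i) for every n ∈ C there is a blocking set Ω̃_n ∋ n such that for all i ∈ Ω̃_n, v_i/Φ_i ≤ v_n/Φ_n and ∑_{i ∈ Ω̃_n} Φ_i ≤ 2; (ii) C* ⊆ ⋃_{n ∈ C} Ω̃_n; and (iii) Φ_n ≥ 1/A + 1/B for all n, where A, B > 0. Then ∑_{n ∈ C} v_n ≥ ((A + B)/(2AB)) · ∑_{i ∈ C*} v_i. -/

import Mathlib

/-!
Each accepted user `n` is charged for the optimal users it blocks. Every user in `Ω̃ n` has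
density at most `v n / Φ n` and the group occupies at most `2`, so the group is worth at most
`2 v n / Φ n ≤ 2 v n / (1/A + 1/B)`. Since these groups cover `C*`, summing over `n ∈ C` gives
`(1/A + 1/B) · v(C*) ≤ 2 · v(C)`, and `(1/A + 1/B) / 2 = (A + B) / (2AB)`.
-/

open Finset

theorem Finset.sum_union_le_add {α β : Type*} [DecidableEq α] [AddCommMonoid β] [PartialOrder β]
    [IsOrderedAddMonoid β] {f : α → β} (hf : ∀ i, 0 ≤ f i) (s t : Finset α) :
    ∑ i ∈ s ∪ t, f i ≤ ∑ i ∈ s, f i + ∑ i ∈ t, f i := by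
  rw [← sum_union_inter]
  exact le_add_of_nonneg_right (sum_nonneg fun i _ => hf i)

theorem Finset.sum_biUnion_le_sum_sum {ι α β : Type*} [DecidableEq α] [AddCommMonoid β]
    [PartialOrder β] [IsOrderedAddMonoid β] {f : α → β} (hf : ∀ i, 0 ≤ f i) (s : Finset ι)
    (t : ι → Finset α) :
    ∑ i ∈ s.biUnion t, f i ≤ ∑ n ∈ s, ∑ i ∈ t n, f i :=
  sup_eq_biUnion s t ▸
    s.apply_sup_le_sum (f := fun u => ∑ i ∈ u, f i) sum_empty (sum_union_le_add hf _ _)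

section Blocking

variable {ι : Type*} {v Φ : ι → ℝ}

theorem sum_le_mul_sum_of_div_le {s : Finset ι} {ρ : ℝ} (hΦ : ∀ i ∈ s, 0 < Φ i)
    (h : ∀ i ∈ s, v i / Φ i ≤ ρ) : ∑ i ∈ s, v i ≤ ρ * ∑ i ∈ s, Φ i := by
  rw [mul_sum]
  exact sum_le_sum fun i hi => (div_le_iff₀ (hΦ i hi)).1 (h i hi)

theorem mul_sum_le_of_density_le {s : Finset ι} {n : ι} {c L : ℝ} (hv : ∀ i ∈ s, 0 ≤ v i)
    (hvn : 0 ≤ v n) (hΦ : ∀ i ∈ s, 0 < Φ i) (hΦn : 0 < Φ n) (hc : c ≤ Φ n)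
    (hdens : ∀ i ∈ s, v i / Φ i ≤ v n / Φ n) (hload : ∑ i ∈ s, Φ i ≤ L) :
    c * ∑ i ∈ s, v i ≤ L * v n :=
  calc c * ∑ i ∈ s, v i
      ≤ Φ n * ∑ i ∈ s, v i := mul_le_mul_of_nonneg_right hc (sum_nonneg hv)
    _ ≤ Φ n * (v n / Φ n * ∑ i ∈ s, Φ i) := by
        gcongr
        exact sum_le_mul_sum_of_div_le hΦ hdens
    _ = v n * ∑ i ∈ s, Φ i := by field_simp
    _ ≤ v n * L := by gcongr
    _ = L * v n := mul_comm _ _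

theorem mul_sum_le_of_subset_biUnion [DecidableEq ι] {C S : Finset ι} {Ω : ι → Finset ι}
    {c L : ℝ} (hv : ∀ i, 0 ≤ v i) (hΦ : ∀ i, 0 < Φ i) (hc₀ : 0 ≤ c) (hc : ∀ n ∈ C, c ≤ Φ n)
    (hdens : ∀ n ∈ C, ∀ i ∈ Ω n, v i / Φ i ≤ v n / Φ n)
    (hload : ∀ n ∈ C, ∑ i ∈ Ω n, Φ i ≤ L) (hcover : S ⊆ C.biUnion Ω) :
    c * ∑ i ∈ S, v i ≤ L * ∑ n ∈ C, v n :=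
  calc c * ∑ i ∈ S, v i
      ≤ c * ∑ n ∈ C, ∑ i ∈ Ω n, v i := by
        gcongr
        exact (sum_le_sum_of_subset_of_nonneg hcover fun i _ _ => hv i).trans
          (sum_biUnion_le_sum_sum hv C Ω)
    _ = ∑ n ∈ C, c * ∑ i ∈ Ω n, v i := mul_sum _ _ _
    _ ≤ ∑ n ∈ C, L * v n := sum_le_sum fun n hn =>
        mul_sum_le_of_density_le (fun i _ => hv i) (hv n) (fun i _ => hΦ i) (hΦ n) (hc n hn)
          (hdens n hn) (hload n hn)
    _ = L * ∑ n ∈ C, v n := (mul_sum _ _ _).symm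

end Blocking

theorem stmt_2_general (N : ℕ) (v Φ : Fin N → ℝ)
    (hv : ∀ n, 0 < v n) (hΦ : ∀ n, 0 < Φ n)
    (C Cstar : Finset (Fin N)) (Ω : Fin N → Finset (Fin N))
    (A B : ℝ) (hA : 0 < A) (hB : 0 < B)
    (hdens : ∀ n ∈ C, ∀ i ∈ Ω n, v i / Φ i ≤ v n / Φ n)
    (hload : ∀ n ∈ C, ∑ i ∈ Ω n, Φ i ≤ 2)
    (hcover : Cstar ⊆ C.biUnion Ω)
    (hocc : ∀ n, 1 / A + 1 / B ≤ Φ n) :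
    ∑ n ∈ C, v n ≥ (A + B) / (2 * A * B) * ∑ i ∈ Cstar, v i := by
  have hbound := mul_sum_le_of_subset_biUnion (fun i => (hv i).le) hΦ (by positivity)
    (fun n _ => hocc n) hdens hload hcover
  have hratio : (A + B) / (2 * A * B) = (1 / A + 1 / B) / 2 := by
    field_simp
    ring
  rw [hratio]
  linarith

/-- Approximation-ratio bound (Theorem 3 of the paper): if every accepted user `n ∈ C`
has a blocking set `Ω̃ n ∋ n` of users with no larger density whose occupancies sum to
at most 2, the blocking sets cover the optimal set `C*`, and every occupancy is at
least `1/A + 1/B`, then the greedy welfare is at least `(A+B)/(2AB)` times optimal. -/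
theorem stmt_2 (N : ℕ) (v Φ : Fin N → ℝ)
    (hv : ∀ n, 0 < v n) (hΦ : ∀ n, 0 < Φ n)
    (C Cstar : Finset (Fin N)) (Ω : Fin N → Finset (Fin N))
    (A B : ℝ) (hA : 0 < A) (hB : 0 < B)
    (hmem : ∀ n ∈ C, n ∈ Ω n)
    (hdens : ∀ n ∈ C, ∀ i ∈ Ω n, v i / Φ i ≤ v n / Φ n)
    (hload : ∀ n ∈ C, ∑ i ∈ Ω n, Φ i ≤ 2)
    (hcover : Cstar ⊆ C.biUnion Ω)
    (hocc : ∀ n, 1 / A + 1 / B ≤ Φ n) :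
    ∑ n ∈ C, v n ≥ (A + B) / (2 * A * B) * ∑ i ∈ Cstar, v i :=
  stmt_2_general N v Φ hv hΦ C Cstar Ω A B hA hB hdens hload hcover hocc
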